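/- Let n ≥ 3 be an integer and let X₁, …, Xₙ be real numbers with X₁ + ⋯ + Xₙ = 0 and (X₁,…,Xₙ) ≠ (0,…,0). Then g₂(X₁,…,Xₙ) < 0; that is, the restriction of the quadratic form g₂ to the hyperplane { X : Σᵢ Xᵢ = 0 } is negative definite. -/

import Mathlib

/-!
On the hyperplane `∑ Xᵢ = 0` we have `∑_{i<j} XᵢXⱼ = -½ ∑ Xᵢ²` and `∑_{j≥2} Xⱼ = -X₁`, so with
`Q = ∑ Xᵢ²` the form collapses to `g₂(X) = 2/(n-1) · X₁² + X₂² - 3/2 · Q`.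
Since `2/(n-1) ≤ 1` for `n ≥ 3` and `X₁² + X₂² ≤ Q`, this is at most `-Q/2 < 0`.
-/

open Finset

/-- The quadratic form `g₂(h₁,…,hₙ) = Σ_{1≤i<j≤n} hᵢhⱼ − (1/(n−1))·h₁·Σ_{j=2}^{n} hⱼ
− Σ_{1≤j≤n, j≠2} hⱼ² + (1/(n−1))·h₁²` (0-based: `h₁ = h 0`, `h₂ = h 1`,
`Σ_{j=2}^{n}` is the sum over indices `j` with `1 ≤ j`). -/
noncomputable def gTwo (n : ℕ) (hn : 3 ≤ n) (h : Fin n → ℝ) : ℝ :=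
  (∑ i : Fin n, ∑ j : Fin n, if i < j then h i * h j else 0)
    - (1 / ((n : ℝ) - 1)) * h ⟨0, by omega⟩ * (∑ j : Fin n, if 1 ≤ (j : ℕ) then h j else 0)
    - (∑ j : Fin n, if (j : ℕ) ≠ 1 then h j ^ 2 else 0)
    + (1 / ((n : ℝ) - 1)) * h ⟨0, by omega⟩ ^ 2

namespace Finset

variable {ι R : Type*} [Fintype ι]

lemma sum_ite_ne_eq_sub [DecidableEq ι] [AddCommGroup R] (f : ι → R) (a : ι) :
    ∑ j, (if j ≠ a then f j else 0) = ∑ j, f j - f a := by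
  rw [← sum_filter, filter_ne', sum_erase_eq_sub (mem_univ a)]

lemma two_mul_sum_sum_ite_lt [LinearOrder ι] [CommRing R] (f : ι → R) :
    2 * ∑ i, ∑ j, (if i < j then f i * f j else 0) = (∑ i, f i) ^ 2 - ∑ i, f i ^ 2 := by
  have hsplit : ∀ i j, f i * f j = (if i < j then f i * f j else 0)
      + (if j < i then f j * f i else 0) + (if i = j then f i * f j else 0) := by
    intro i j
    rcases lt_trichotomy i j with h | rfl | h
    · simp [h, h.not_gt, h.ne]
    · simp
    · simp [h, h.not_gt, h.ne', mul_comm]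
  have hsq_sum : (∑ i, f i) ^ 2 = ∑ i, ∑ j, f i * f j := by rw [sq, sum_mul_sum]
  rw [hsq_sum, sum_congr rfl fun i _ ↦ sum_congr rfl fun j _ ↦ hsplit i j]
  simp only [sum_add_distrib, sum_ite_eq, mem_univ, if_true]
  rw [sum_comm (f := fun i j ↦ if j < i then f j * f i else 0)]
  simp only [sq]
  ring

lemma sum_sq_pos_of_ne_zero [Ring R] [LinearOrder R] [IsStrictOrderedRing R] {f : ι → R}
    (hf : f ≠ 0) : 0 < ∑ i, f i ^ 2 := by
  obtain ⟨k, hk⟩ := Function.ne_iff.mp hf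
  exact sum_pos' (fun i _ ↦ sq_nonneg (f i)) ⟨k, mem_univ k, sq_pos_of_ne_zero hk⟩

end Finset

lemma gTwo_eq_of_sum_eq_zero (n : ℕ) (hn : 3 ≤ n) {X : Fin n → ℝ} (hsum : ∑ i, X i = 0) :
    gTwo n hn X = 2 / ((n : ℝ) - 1) * X ⟨0, by omega⟩ ^ 2 + X ⟨1, by omega⟩ ^ 2
      - 3 / 2 * ∑ i, X i ^ 2 := by
  have hpairs := two_mul_sum_sum_ite_lt X
  have htail : (∑ j : Fin n, if 1 ≤ (j : ℕ) then X j else 0) = -X ⟨0, by omega⟩ := by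
    calc (∑ j : Fin n, if 1 ≤ (j : ℕ) then X j else 0)
        _ = ∑ j, if j ≠ ⟨0, by omega⟩ then X j else 0 :=
          sum_congr rfl fun j _ ↦ if_congr (by simp [Fin.ext_iff, Nat.one_le_iff_ne_zero]) rfl rfl
        _ = -X ⟨0, by omega⟩ := by rw [sum_ite_ne_eq_sub, hsum, zero_sub]
  have hsq : (∑ j : Fin n, if (j : ℕ) ≠ 1 then X j ^ 2 else 0)
      = ∑ j, X j ^ 2 - X ⟨1, by omega⟩ ^ 2 := by
    rw [← sum_ite_ne_eq_sub]
    exact sum_congr rfl fun j _ ↦ if_congr (by simp [Fin.ext_iff]) rfl rfl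
  rw [hsum, zero_pow two_ne_zero, zero_sub] at hpairs
  rw [gTwo, htail, hsq]
  linear_combination hpairs / 2

theorem stmt_17 (n : ℕ) (hn : 3 ≤ n) (X : Fin n → ℝ)
    (hsum : ∑ i, X i = 0) (hX : X ≠ 0) :
    gTwo n hn X < 0 := by
  have hQ := sum_sq_pos_of_ne_zero hX
  have hpair : X ⟨0, by omega⟩ ^ 2 + X ⟨1, by omega⟩ ^ 2 ≤ ∑ i, X i ^ 2 :=
    add_le_sum (fun i _ ↦ sq_nonneg (X i)) (mem_univ _) (mem_univ _) (by simp)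
  have hcoeff : 2 / ((n : ℝ) - 1) ≤ 1 := by
    have : (3 : ℝ) ≤ n := by exact_mod_cast hn
    rw [div_le_one (by linarith)]
    linarith
  rw [gTwo_eq_of_sum_eq_zero n hn hsum]
  linarith [mul_nonneg (sub_nonneg.mpr hcoeff) (sq_nonneg (X ⟨0, by omega⟩))]
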